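/- arXiv:2212.14562 — 4 statements merged into one kernel-verified Lean document; each statement's English description precedes it below -/
import Mathlib

section
/- Let x = (x₁, …, x_d) be a random vector with E|x_i|⁴ ≤ M for every i ∈ {1,…,d}, and let ζ > 0. Define the truncated vector x̃ entrywise by x̃_i = sign(x_i)·min{|x_i|, ζ}. Then for all i, j ∈ {1,…,d}, |E[x̃_i x̃_j] − E[x_i x_j]| ≤ 2M/ζ². -/
/-! Truncation keeps the sign and shrinks `|a|` by `|a| - min |a| ζ ≤ |a| (|a| / ζ)²`, so the
pointwise error of the product is at most `(|a| |b|³ + |b| |a|³) / ζ² ≤ (|a|⁴ + |b|⁴) / ζ²`, whose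
expectation is at most `2M / ζ²`. Only the difference of the two products has to be integrable:
if neither product is, both integrals vanish. -/

open MeasureTheory ProbabilityTheory

noncomputable section

/-- Truncation of a real number at level `ζ` : `sign(a) * min {|a|, ζ}`. -/
def trunc (ζ a : ℝ) : ℝ := Real.sign a * min |a| ζ

theorem Real.measurable_sign : Measurable Real.sign :=
  measurable_const.ite measurableSet_Iio (measurable_const.ite measurableSet_Ioi measurable_const)

theorem measurable_trunc (ζ : ℝ) : Measurable (trunc ζ) :=
  Real.measurable_sign.mul (measurable_abs.min measurable_const)

theorem abs_trunc {ζ : ℝ} (hζ : 0 ≤ ζ) (a : ℝ) : |trunc ζ a| = min |a| ζ := by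
  rcases lt_trichotomy a 0 with h | rfl | h
  · simp [trunc, Real.sign_of_neg h, hζ]
  · simp [trunc, Real.sign_zero, hζ]
  · simp [trunc, Real.sign_of_pos h, hζ]

theorem abs_trunc_sub_self {ζ : ℝ} (hζ : 0 ≤ ζ) (a : ℝ) :
    |trunc ζ a - a| = |a| - min |a| ζ := by
  rcases lt_trichotomy a 0 with h | rfl | h
  · rw [trunc, Real.sign_of_neg h, abs_of_neg h, abs_of_nonneg] <;> grind
  · simp [trunc, Real.sign_zero, hζ]
  · rw [trunc, Real.sign_of_pos h, abs_of_pos h, abs_of_nonpos] <;> grind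

theorem abs_trunc_sub_self_le {ζ : ℝ} (hζ : 0 < ζ) (a : ℝ) :
    |trunc ζ a - a| ≤ |a| ^ 3 / ζ ^ 2 := by
  rw [abs_trunc_sub_self hζ.le, le_div_iff₀ (by positivity)]
  rcases le_total |a| ζ with h | h
  · rw [min_eq_left h, sub_self, zero_mul]
    positivity
  · have hζa : ζ ^ 2 ≤ |a| ^ 2 := pow_le_pow_left₀ hζ.le h 2
    calc (|a| - min |a| ζ) * ζ ^ 2 ≤ |a| * ζ ^ 2 := by
          gcongr
          exact sub_le_self _ (le_min (abs_nonneg a) hζ.le)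
      _ ≤ |a| * |a| ^ 2 := by gcongr
      _ = |a| ^ 3 := by ring

theorem abs_mul_sub_mul_le (a b a' b' : ℝ) :
    |a' * b' - a * b| ≤ |a'| * |b' - b| + |b| * |a' - a| :=
  calc |a' * b' - a * b| = |a' * (b' - b) + b * (a' - a)| := by ring_nf
    _ ≤ |a' * (b' - b)| + |b * (a' - a)| := abs_add_le _ _
    _ = |a'| * |b' - b| + |b| * |a' - a| := by rw [abs_mul, abs_mul]

theorem abs_trunc_mul_trunc_sub_mul_le {ζ : ℝ} (hζ : 0 < ζ) (a b : ℝ) :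
    |trunc ζ a * trunc ζ b - a * b| ≤ (|a| ^ 4 + |b| ^ 4) / ζ ^ 2 := by
  have htrunc_a : |trunc ζ a| ≤ |a| := (abs_trunc hζ.le a).trans_le (min_le_left _ _)
  have hsum : |a| * |b| ^ 3 + |b| * |a| ^ 3 ≤ |a| ^ 4 + |b| ^ 4 := by
    nlinarith [mul_nonneg (mul_self_nonneg (|a| - |b|))
      (add_nonneg (add_nonneg (sq_nonneg |a|) (sq_nonneg |b|)) (mul_nonneg (abs_nonneg a) (abs_nonneg b)))]
  calc |trunc ζ a * trunc ζ b - a * b|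
      ≤ |trunc ζ a| * |trunc ζ b - b| + |b| * |trunc ζ a - a| := abs_mul_sub_mul_le _ _ _ _
    _ ≤ |a| * (|b| ^ 3 / ζ ^ 2) + |b| * (|a| ^ 3 / ζ ^ 2) := by
        gcongr
        · exact abs_trunc_sub_self_le hζ b
        · exact abs_trunc_sub_self_le hζ a
    _ = (|a| * |b| ^ 3 + |b| * |a| ^ 3) / ζ ^ 2 := by ring
    _ ≤ (|a| ^ 4 + |b| ^ 4) / ζ ^ 2 := by gcongr

theorem abs_integral_sub_integral_le_of_integrable_sub {Ω : Type*} [MeasurableSpace Ω]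
    {μ : Measure Ω} {f g : Ω → ℝ} (hfg : Integrable (f - g) μ) :
    |∫ ω, f ω ∂μ - ∫ ω, g ω ∂μ| ≤ ∫ ω, |f ω - g ω| ∂μ := by
  by_cases hf : Integrable f μ
  · have hg : Integrable g μ := by simpa using hf.sub hfg
    rw [← integral_sub hf hg]
    exact abs_integral_le_integral_abs
  · have hg : ¬ Integrable g μ := fun hg => hf (by simpa using hfg.add hg)
    rw [integral_undef hf, integral_undef hg, sub_self, abs_zero]
    exact integral_nonneg fun ω => abs_nonneg _

theorem truncation_bias_general
    {Ω : Type*} [MeasurableSpace Ω] (μ : Measure Ω)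
    {d : ℕ} (x : Ω → Fin d → ℝ)
    (hmeas : ∀ i, Measurable fun ω => x ω i)
    (M : ℝ)
    (hint4 : ∀ i, Integrable (fun ω => |x ω i| ^ 4) μ)
    (hM : ∀ i, ∫ ω, |x ω i| ^ 4 ∂μ ≤ M)
    (ζ : ℝ) (hζ : 0 < ζ) :
    ∀ i j, |(∫ ω, trunc ζ (x ω i) * trunc ζ (x ω j) ∂μ) - ∫ ω, x ω i * x ω j ∂μ|
      ≤ 2 * M / ζ ^ 2 := by
  intro i j
  have hbound : Integrable (fun ω => (|x ω i| ^ 4 + |x ω j| ^ 4) / ζ ^ 2) μ :=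
    ((hint4 i).add (hint4 j)).div_const _
  have hpointwise : ∀ ω, |trunc ζ (x ω i) * trunc ζ (x ω j) - x ω i * x ω j|
      ≤ (|x ω i| ^ 4 + |x ω j| ^ 4) / ζ ^ 2 := fun ω =>
    abs_trunc_mul_trunc_sub_mul_le hζ _ _
  have hdiff : Integrable
      ((fun ω => trunc ζ (x ω i) * trunc ζ (x ω j)) - fun ω => x ω i * x ω j) μ := by
    refine hbound.mono' ?_ (.of_forall hpointwise)
    exact ((((measurable_trunc ζ).comp (hmeas i)).mul ((measurable_trunc ζ).comp (hmeas j))).sub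
      ((hmeas i).mul (hmeas j))).aestronglyMeasurable
  calc _ ≤ ∫ ω, |trunc ζ (x ω i) * trunc ζ (x ω j) - x ω i * x ω j| ∂μ :=
        abs_integral_sub_integral_le_of_integrable_sub hdiff
    _ ≤ ∫ ω, (|x ω i| ^ 4 + |x ω j| ^ 4) / ζ ^ 2 ∂μ := integral_mono hdiff.abs hbound hpointwise
    _ = ((∫ ω, |x ω i| ^ 4 ∂μ) + ∫ ω, |x ω j| ^ 4 ∂μ) / ζ ^ 2 := by
        rw [integral_div, integral_add (hint4 i) (hint4 j)]
    _ ≤ 2 * M / ζ ^ 2 := by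
        gcongr
        linarith [hM i, hM j]

/-- bias of elementwise truncation under bounded fourth moments.
If `x = (x₁, …, x_d)` is a random vector with `E|x_i|⁴ ≤ M` for every coordinate and `ζ > 0`,
and `x̃_i = sign(x_i)·min{|x_i|, ζ}`, then `|E[x̃_i x̃_j] − E[x_i x_j]| ≤ 2M/ζ²` for all `i, j`. -/
theorem truncation_bias
    {Ω : Type*} [MeasurableSpace Ω] (μ : Measure Ω) [IsProbabilityMeasure μ]
    {d : ℕ} (x : Ω → Fin d → ℝ)
    (hmeas : ∀ i, Measurable fun ω => x ω i)
    (M : ℝ)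
    (hint4 : ∀ i, Integrable (fun ω => |x ω i| ^ 4) μ)
    (hM : ∀ i, ∫ ω, |x ω i| ^ 4 ∂μ ≤ M)
    (ζ : ℝ) (hζ : 0 < ζ) :
    ∀ i j, |(∫ ω, trunc ζ (x ω i) * trunc ζ (x ω j) ∂μ) - ∫ ω, x ω i * x ω j ∂μ|
      ≤ 2 * M / ζ ^ 2 :=
  truncation_bias_general μ x hmeas M hint4 hM ζ hζ
end
end

section
/- There exist universal constants C₁, C₂, C₃ > 0 such that the following deterministic statement holds. Let θ* ∈ ℝ^d be s-sparse with ‖θ*‖₁ ≤ R, and let Σ* ∈ ℝ^{d×d} be a symmetric matrix with λ_min(Σ*) ≥ κ₀ > 0. Let Q ∈ ℝ^{d×d} be symmetric, b ∈ ℝ^d, and suppose λ ≥ C₁·max{ ‖Qθ* − b‖_∞, R·‖Q − Σ*‖_∞ }. Then every stationary point θ̃ of the program min_{θ∈S} ½θᵀQθ − bᵀθ + λ‖θ‖₁ with S = {θ ∈ ℝ^d : ‖θ‖₁ ≤ R} satisfies ‖θ̃ − θ*‖₂ ≤ C₂·√s·λ/κ₀ and ‖θ̃ − θ*‖₁ ≤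 C₃·s·λ/κ₀. -/
open Finset

noncomputable section

/-- ℓ₁ norm on `ℝ^d`. -/
def l1 {d : ℕ} (v : Fin d → ℝ) : ℝ := ∑ i, |v i|

/-- ℓ₂ norm on `ℝ^d`. -/
def l2 {d : ℕ} (v : Fin d → ℝ) : ℝ := Real.sqrt (∑ i, (v i) ^ 2)

/-- ℓ∞ norm on `ℝ^d` (maximum absolute entry). -/
def linf {d : ℕ} (v : Fin d → ℝ) : ℝ := sSup {r : ℝ | ∃ i, r = |v i|}

/-- Maximum absolute entry of a matrix. -/
def matSup {d : ℕ} (A : Matrix (Fin d) (Fin d) ℝ) : ℝ := sSup {r : ℝ | ∃ i j, r = |A i j|}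

/-- A vector is `s`-sparse if it has at most `s` nonzero entries. -/
def sparse {d : ℕ} (s : ℕ) (v : Fin d → ℝ) : Prop := {i | v i ≠ 0}.ncard ≤ s

/-- The quadratic form `vᵀ A v` of a matrix. -/
def quadForm {d : ℕ} (A : Matrix (Fin d) (Fin d) ℝ) (v : Fin d → ℝ) : ℝ :=
  ∑ i, ∑ j, v i * A i j * v j

/-- `g` belongs to the subdifferential of the ℓ₁ norm at `θ`. -/
def IsL1Subgradient {d : ℕ} (g θ : Fin d → ℝ) : Prop :=
  ∀ θ' : Fin d → ℝ, l1 θ + ∑ i, g i * (θ' i - θ i) ≤ l1 θ'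

/-- `θ̃ ∈ S` is a stationary point of `min_{θ∈S} ½θᵀQθ − bᵀθ + λ‖θ‖₁`:
there is a subgradient `g` of the ℓ₁ norm at `θ̃` with
`⟨Qθ̃ − b + λg, θ − θ̃⟩ ≥ 0` for all `θ ∈ S`. -/
def IsStationaryL1 {d : ℕ} (Q : Matrix (Fin d) (Fin d) ℝ) (b : Fin d → ℝ) (lam : ℝ)
    (S : Set (Fin d → ℝ)) (θt : Fin d → ℝ) : Prop :=
  θt ∈ S ∧ ∃ g : Fin d → ℝ, IsL1Subgradient g θt ∧
    ∀ θ ∈ S, 0 ≤ ∑ i, (Q.mulVec θt i - b i + lam * g i) * (θ i - θt i)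


/-! Writing `Δ = θ̃ - θ*` and `T` for the support of `θ*`, stationarity tested against the
feasible point `θ*` and convexity of `‖·‖₁` give `(Qθ̃ - b)ᵀΔ ≤ λ(‖Δ_T‖₁ - ‖Δ_{Tᶜ}‖₁)`.
The left side equals `(Qθ* - b)ᵀΔ + ΔᵀΣ*Δ + Δᵀ(Q - Σ*)Δ`, which is at least
`κ₀‖Δ‖₂² - (λ/4)‖Δ‖₁ - (λ/2)‖Δ‖₁` because `‖Δ‖₁ ≤ 2R` turns the quadratic perturbation term
into a linear one. Hence `κ₀‖Δ‖₂² ≤ (λ/4)(7‖Δ_T‖₁ - ‖Δ_{Tᶜ}‖₁)`: the error lies in a cone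
around the support, where `‖Δ_T‖₁ ≤ √s‖Δ‖₂` closes the argument with `C₁ = 4`, `C₂ = 7/4`,
`C₃ = 14`. -/

open Matrix

section Norms

variable {d : ℕ}

lemma l1_nonneg (v : Fin d → ℝ) : 0 ≤ l1 v :=
  sum_nonneg fun i _ => abs_nonneg (v i)

lemma l2_nonneg (v : Fin d → ℝ) : 0 ≤ l2 v :=
  Real.sqrt_nonneg _

lemma linf_nonneg (v : Fin d → ℝ) : 0 ≤ linf v :=
  Real.sSup_nonneg (by rintro x ⟨i, rfl⟩; exact abs_nonneg _)

lemma matSup_nonneg (A : Matrix (Fin d) (Fin d) ℝ) : 0 ≤ matSup A :=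
  Real.sSup_nonneg (by rintro x ⟨i, j, rfl⟩; exact abs_nonneg _)

lemma abs_le_linf (v : Fin d → ℝ) (i : Fin d) : |v i| ≤ linf v :=
  le_csSup ((Set.finite_range fun i => |v i|).bddAbove.mono
    (by rintro _ ⟨j, rfl⟩; exact ⟨j, rfl⟩)) ⟨i, rfl⟩

lemma abs_le_matSup (A : Matrix (Fin d) (Fin d) ℝ) (i j : Fin d) : |A i j| ≤ matSup A :=
  le_csSup ((Set.finite_range fun p : Fin d × Fin d => |A p.1 p.2|).bddAbove.mono
    (by rintro _ ⟨k, l, rfl⟩; exact ⟨(k, l), rfl⟩)) ⟨i, j, rfl⟩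

lemma l1_sub_le (u v : Fin d → ℝ) : l1 (u - v) ≤ l1 u + l1 v := by
  rw [l1, l1, l1, ← sum_add_distrib]
  exact sum_le_sum fun i _ => abs_sub (u i) (v i)

lemma l1_eq_sum_add_sum_compl (T : Finset (Fin d)) (v : Fin d → ℝ) :
    l1 v = ∑ i ∈ T, |v i| + ∑ i ∈ Tᶜ, |v i| :=
  (sum_add_sum_compl T _).symm

lemma sum_abs_le_sqrt_card_mul_l2 (T : Finset (Fin d)) (v : Fin d → ℝ) :
    ∑ i ∈ T, |v i| ≤ Real.sqrt T.card * l2 v := by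
  have hsq : ∑ i ∈ T, |v i| ^ 2 ≤ ∑ i, v i ^ 2 := by
    simp only [sq_abs]
    exact sum_le_sum_of_subset_of_nonneg (subset_univ T) fun i _ _ => sq_nonneg (v i)
  have hcs : (∑ i ∈ T, |v i|) ^ 2 ≤ T.card * ∑ i, v i ^ 2 :=
    (sq_sum_le_card_mul_sum_sq).trans (mul_le_mul_of_nonneg_left hsq (Nat.cast_nonneg _))
  rw [l2, ← Real.sqrt_mul (Nat.cast_nonneg _)]
  exact (le_abs_self _).trans (Real.abs_le_sqrt hcs)

lemma abs_dotProduct_le_linf_mul_l1 (u v : Fin d → ℝ) : |u ⬝ᵥ v| ≤ linf u * l1 v := by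
  rw [dotProduct, l1, mul_sum]
  refine (abs_sum_le_sum_abs _ _).trans (sum_le_sum fun i _ => ?_)
  rw [abs_mul]
  exact mul_le_mul_of_nonneg_right (abs_le_linf u i) (abs_nonneg _)

/-- Outside a set `T` carrying `θs`, the error `θt - θs` is paid in full by `‖θt‖₁`. -/
lemma l1_sub_l1_le_of_support_subset {θs θt : Fin d → ℝ} {T : Finset (Fin d)}
    (hT : ∀ i ∉ T, θs i = 0) :
    l1 θs - l1 θt ≤ ∑ i ∈ T, |(θt - θs) i| - ∑ i ∈ Tᶜ, |(θt - θs) i| := by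
  rw [l1_eq_sum_add_sum_compl T θs, l1_eq_sum_add_sum_compl T θt]
  have hon : ∑ i ∈ T, |θs i| ≤ ∑ i ∈ T, |θt i| + ∑ i ∈ T, |(θt - θs) i| := by
    rw [← sum_add_distrib]
    refine sum_le_sum fun i _ => ?_
    rw [Pi.sub_apply, abs_sub_comm]
    linarith [abs_sub_abs_le_abs_sub (θs i) (θt i)]
  have hoff : ∑ i ∈ Tᶜ, |θs i| = 0 :=
    sum_eq_zero fun i hi => by rw [hT i (mem_compl.mp hi), abs_zero]
  have hoff' : ∑ i ∈ Tᶜ, |(θt - θs) i| = ∑ i ∈ Tᶜ, |θt i| :=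
    sum_congr rfl fun i hi => by rw [Pi.sub_apply, hT i (mem_compl.mp hi), sub_zero]
  linarith

lemma sparse.card_filter_ne_zero_le {s : ℕ} {v : Fin d → ℝ} (h : sparse s v) :
    (univ.filter fun i => v i ≠ 0).card ≤ s := by
  simpa only [sparse, ← Set.ncard_coe_finset, coe_filter, mem_univ, true_and] using h

end Norms

section QuadForm

variable {d : ℕ}

lemma quadForm_eq_dotProduct_mulVec (A : Matrix (Fin d) (Fin d) ℝ) (v : Fin d → ℝ) :
    quadForm A v = v ⬝ᵥ A *ᵥ v := by
  simp only [quadForm, dotProduct, mulVec, mul_sum, mul_assoc]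

lemma quadForm_sub (A B : Matrix (Fin d) (Fin d) ℝ) (v : Fin d → ℝ) :
    quadForm (A - B) v = quadForm A v - quadForm B v := by
  simp only [quadForm_eq_dotProduct_mulVec, sub_mulVec, dotProduct_sub]

lemma abs_quadForm_le_matSup_mul_sq_l1 (A : Matrix (Fin d) (Fin d) ℝ) (v : Fin d → ℝ) :
    |quadForm A v| ≤ matSup A * l1 v ^ 2 := by
  calc |quadForm A v| ≤ ∑ i, ∑ j, |v i| * matSup A * |v j| := by
        refine (abs_sum_le_sum_abs _ _).trans (sum_le_sum fun i _ => ?_)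
        refine (abs_sum_le_sum_abs _ _).trans (sum_le_sum fun j _ => ?_)
        rw [abs_mul, abs_mul]
        gcongr
        exact abs_le_matSup A i j
    _ = matSup A * l1 v ^ 2 := by
        rw [l1, sq, sum_mul_sum, mul_sum]
        refine sum_congr rfl fun i _ => ?_
        rw [mul_sum]
        exact sum_congr rfl fun j _ => by ring

lemma mulVec_sub_dotProduct_eq (Q : Matrix (Fin d) (Fin d) ℝ) (b u v : Fin d → ℝ) :
    (Q *ᵥ u - b) ⬝ᵥ (u - v) = (Q *ᵥ v - b) ⬝ᵥ (u - v) + quadForm Q (u - v) := by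
  rw [quadForm_eq_dotProduct_mulVec, dotProduct_comm (u - v), mulVec_sub, ← add_dotProduct]
  congr 1
  abel

end QuadForm

lemma IsStationaryL1.dotProduct_sub_le {d : ℕ} {Q : Matrix (Fin d) (Fin d) ℝ} {b : Fin d → ℝ}
    {lam : ℝ} {S : Set (Fin d → ℝ)} {θt θ : Fin d → ℝ} (hstat : IsStationaryL1 Q b lam S θt)
    (hθ : θ ∈ S) (hlam : 0 ≤ lam) :
    (Q *ᵥ θt - b) ⬝ᵥ (θt - θ) ≤ lam * (l1 θ - l1 θt) := by
  obtain ⟨-, g, hg, hvar⟩ := hstat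
  have hsplit : ∑ i, ((Q *ᵥ θt) i - b i + lam * g i) * (θ i - θt i)
      = -((Q *ᵥ θt - b) ⬝ᵥ (θt - θ)) + lam * ∑ i, g i * (θ i - θt i) := by
    simp only [dotProduct, mul_sum, ← sum_neg_distrib, ← sum_add_distrib, Pi.sub_apply]
    exact sum_congr rfl fun i _ => by ring
  have hsub : lam * ∑ i, g i * (θ i - θt i) ≤ lam * (l1 θ - l1 θt) :=
    mul_le_mul_of_nonneg_left (by linarith [hg θ]) hlam
  linarith [hvar θ hθ]

lemma IsStationaryL1.mul_sq_l2_sub_le {d : ℕ} {Q Sig : Matrix (Fin d) (Fin d) ℝ}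
    {b θs θt : Fin d → ℝ} {R κ₀ lam : ℝ} {T : Finset (Fin d)}
    (hstat : IsStationaryL1 Q b lam {θ | l1 θ ≤ R} θt) (hθs : l1 θs ≤ R)
    (hT : ∀ i ∉ T, θs i = 0) (hRE : κ₀ * l2 (θt - θs) ^ 2 ≤ quadForm Sig (θt - θs))
    (hgrad : 4 * linf (Q *ᵥ θs - b) ≤ lam) (hdev : 4 * (R * matSup (Q - Sig)) ≤ lam) :
    κ₀ * l2 (θt - θs) ^ 2 ≤
      lam * (7 * ∑ i ∈ T, |(θt - θs) i| - ∑ i ∈ Tᶜ, |(θt - θs) i|) / 4 := by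
  set Δ := θt - θs
  have hlam : 0 ≤ lam := by linarith [linf_nonneg (Q *ᵥ θs - b)]
  have hbasic : (Q *ᵥ θt - b) ⬝ᵥ Δ ≤ lam * (l1 θs - l1 θt) := hstat.dotProduct_sub_le hθs hlam
  have hcone : lam * (l1 θs - l1 θt) ≤ lam * (∑ i ∈ T, |Δ i| - ∑ i ∈ Tᶜ, |Δ i|) :=
    mul_le_mul_of_nonneg_left (l1_sub_l1_le_of_support_subset hT) hlam
  have hexpand : (Q *ᵥ θt - b) ⬝ᵥ Δ = (Q *ᵥ θs - b) ⬝ᵥ Δ + quadForm Q Δ :=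
    mulVec_sub_dotProduct_eq Q b θt θs
  have hquad : quadForm Q Δ = quadForm Sig Δ + quadForm (Q - Sig) Δ := by
    rw [quadForm_sub]; ring
  have hgradterm : -(linf (Q *ᵥ θs - b) * l1 Δ) ≤ (Q *ᵥ θs - b) ⬝ᵥ Δ :=
    neg_le_of_abs_le (abs_dotProduct_le_linf_mul_l1 _ _)
  have hdevterm : -(matSup (Q - Sig) * l1 Δ ^ 2) ≤ quadForm (Q - Sig) Δ :=
    neg_le_of_abs_le (abs_quadForm_le_matSup_mul_sq_l1 _ _)
  have hl1 : l1 Δ ≤ 2 * R := (l1_sub_le θt θs).trans (by linarith [show l1 θt ≤ R from hstat.1])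
  have hdevlin : matSup (Q - Sig) * l1 Δ ^ 2 ≤ lam / 2 * l1 Δ := by
    have hM := matSup_nonneg (Q - Sig)
    have hΔ := l1_nonneg Δ
    calc matSup (Q - Sig) * l1 Δ ^ 2 ≤ matSup (Q - Sig) * (2 * R * l1 Δ) := by gcongr; nlinarith
      _ = 2 * (R * matSup (Q - Sig)) * l1 Δ := by ring
      _ ≤ lam / 2 * l1 Δ := by gcongr; linarith
  have hgradlin : linf (Q *ᵥ θs - b) * l1 Δ ≤ lam / 4 * l1 Δ :=
    mul_le_mul_of_nonneg_right (by linarith) (l1_nonneg Δ)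
  rw [l1_eq_sum_add_sum_compl T Δ] at hgradterm hdevterm hgradlin hdevlin
  linarith

lemma error_bounds_of_mul_sq_le {κ lam s x a c K : ℝ} (hκ : 0 < κ) (hlam : 0 ≤ lam)
    (hs : 0 ≤ s) (hx : 0 ≤ x) (hc0 : 0 ≤ c) (ha : a ≤ Real.sqrt s * x) (hc : c ≤ K * x)
    (h : κ * x ^ 2 ≤ lam * (7 * a - c) / 4) :
    x ≤ 7 / 4 * Real.sqrt s * lam / κ ∧ a + c ≤ 14 * s * lam / κ := by
  have hsqrt : Real.sqrt s * Real.sqrt s = s := Real.mul_self_sqrt hs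
  have hx_bound : x ≤ 7 / 4 * Real.sqrt s * lam / κ := by
    rcases hx.eq_or_lt with rfl | hxpos
    · positivity
    rw [le_div_iff₀ hκ]
    refine le_of_mul_le_mul_right ?_ hxpos
    nlinarith [mul_le_mul_of_nonneg_left ha hlam, mul_nonneg hlam hc0]
  refine ⟨hx_bound, ?_⟩
  rcases hlam.eq_or_lt with rfl | hlampos
  · have hx0 : x = 0 := le_antisymm (by simpa using hx_bound) hx
    subst hx0
    simp only [mul_zero, zero_div] at ha hc ⊢
    linarith
  · have hca : c ≤ 7 * a := by nlinarith [mul_nonneg hκ.le (sq_nonneg x)]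
    calc a + c ≤ 8 * (Real.sqrt s * x) := by linarith
      _ ≤ 8 * (Real.sqrt s * (7 / 4 * Real.sqrt s * lam / κ)) := by gcongr
      _ = 14 * (Real.sqrt s * Real.sqrt s) * lam / κ := by ring
      _ = 14 * s * lam / κ := by rw [hsqrt]

/-- deterministic guarantee for all stationary points of the possibly
non-convex program. If `θ*` is `s`-sparse with `‖θ*‖₁ ≤ R`, `λ_min(Σ*) ≥ κ₀ > 0`, and
`λ ≥ C₁·max{‖Qθ* − b‖_∞, R‖Q − Σ*‖_∞}`, then every stationary point `θ̃` of
`min_{‖θ‖₁≤R} ½θᵀQθ − bᵀθ + λ‖θ‖₁` satisfies `‖θ̃ − θ*‖₂ ≤ C₂√s·λ/κ₀` and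
`‖θ̃ − θ*‖₁ ≤ C₃s·λ/κ₀`. -/
theorem nonconvex_stationary_framework :
    ∃ C₁ C₂ C₃ : ℝ, 0 < C₁ ∧ 0 < C₂ ∧ 0 < C₃ ∧
    ∀ (d s : ℕ) (θs : Fin d → ℝ) (R κ₀ lam : ℝ)
      (Sig Q : Matrix (Fin d) (Fin d) ℝ) (b : Fin d → ℝ),
      sparse s θs → l1 θs ≤ R →
      Sig.IsSymm → 0 < κ₀ → (∀ v : Fin d → ℝ, κ₀ * (l2 v) ^ 2 ≤ quadForm Sig v) →
      Q.IsSymm →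
      C₁ * max (linf (Q.mulVec θs - b)) (R * matSup (Q - Sig)) ≤ lam →
      ∀ θt : Fin d → ℝ,
        IsStationaryL1 Q b lam {θ : Fin d → ℝ | l1 θ ≤ R} θt →
        l2 (θt - θs) ≤ C₂ * Real.sqrt s * lam / κ₀ ∧
        l1 (θt - θs) ≤ C₃ * s * lam / κ₀ := by
  refine ⟨4, 7 / 4, 14, by norm_num, by norm_num, by norm_num, ?_⟩
  intro d s θs R κ₀ lam Sig Q b hsp hθs _ hκ hRE _ hlam θt hstat
  have hgrad : 4 * linf (Q *ᵥ θs - b) ≤ lam :=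
    (mul_le_mul_of_nonneg_left (le_max_left _ _) (by norm_num)).trans hlam
  have hdev : 4 * (R * matSup (Q - Sig)) ≤ lam :=
    (mul_le_mul_of_nonneg_left (le_max_right _ _) (by norm_num)).trans hlam
  set T := univ.filter fun i => θs i ≠ 0
  have hT : ∀ i ∉ T, θs i = 0 := fun i hi => by simpa [T] using hi
  have hcone := hstat.mul_sq_l2_sub_le hθs hT (hRE _) hgrad hdev
  have hsupp : ∑ i ∈ T, |(θt - θs) i| ≤ Real.sqrt s * l2 (θt - θs) :=
    (sum_abs_le_sqrt_card_mul_l2 T _).trans <| mul_le_mul_of_nonneg_right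
      (Real.sqrt_le_sqrt (by exact_mod_cast hsp.card_filter_ne_zero_le)) (l2_nonneg _)
  rw [l1_eq_sum_add_sum_compl T]
  exact error_bounds_of_mul_sq_le hκ (by linarith [linf_nonneg (Q *ᵥ θs - b)]) s.cast_nonneg
    (l2_nonneg _) (sum_nonneg fun i _ => abs_nonneg _) hsupp
    (sum_abs_le_sqrt_card_mul_l2 Tᶜ _) hcone
end
end

section
/- Let X₁, …, Xₙ and Θ* be d×d real matrices with rank(Θ*) ≤ r and ‖Θ*‖_∞ ≤ α, let ẏ₁, …, ẏₙ ∈ ℝ and λ > 0, and let Θ̂ be a minimizer of (1/(2n))·Σ_{k=1}^n (ẏ_k − ⟨X_k, Θ⟩)² + λ‖Θ‖_nu over {Θ : ‖Θ‖_∞ ≤ α}; set Δ̂ = Θ̂ − Θ*. If λ ≥ 2‖(1/n)·Σ_{k=1}^n (⟨X_k, Θ*⟩ − ẏ_k)·X_k‖_op, then ‖Δ̂‖_nu ≤ 10√r·‖Δ̂‖_F. If moreover (1/n)·Σ_{k=1}^n ⟨X_k, Δ̂⟩² ≥ κ‖Δ̂‖_F² for some κ > 0, then ‖Δ̂‖_F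 ≤ 30√r·(λ/κ) and ‖Δ̂‖_nu ≤ 300r·(λ/κ). -/
open Finset

noncomputable section

/-- Trace inner product `⟨A, B⟩ = trace(AᵀB) = Σ_{ij} A_{ij}B_{ij}` of real matrices. -/
def minner {d : ℕ} (A B : Matrix (Fin d) (Fin d) ℝ) : ℝ := ∑ i, ∑ j, A i j * B i j

/-- Frobenius norm of a real matrix. -/
def frobNorm {d : ℕ} (A : Matrix (Fin d) (Fin d) ℝ) : ℝ := Real.sqrt (∑ i, ∑ j, (A i j) ^ 2)

/-- Operator (spectral) norm of a real matrix. -/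
def opNorm {d : ℕ} (A : Matrix (Fin d) (Fin d) ℝ) : ℝ :=
  sSup {r : ℝ | ∃ v : Fin d → ℝ, l2 v = 1 ∧ r = l2 (A.mulVec v)}

/-- Nuclear norm of a real matrix: the sum of its singular values, i.e. the sum of the
square roots of the eigenvalues of `AᵀA`. -/
def nucNorm {d : ℕ} (A : Matrix (Fin d) (Fin d) ℝ) : ℝ :=
  ∑ i, Real.sqrt ((Matrix.posSemidef_conjTranspose_mul_self A).1.eigenvalues i)

/-!
Comparing the objective at `Θ̂` and at `Θ*` gives the basic inequality
`(1/2n) Σ ⟨X_k, Δ⟩² + ⟨M, Δ⟩ + λ‖Θ* + Δ‖_nu ≤ λ‖Θ*‖_nu` with `M = (1/n) Σ (⟨X_k, Θ*⟩ − ẏ_k) X_k`.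
Write `Δ = Δ' + Δ''` with `Δ'' = (1 − P) Δ (1 − Q)`, where `P`, `Q` project onto the column and
row spaces of `Θ*`. Then `rank Δ' ≤ 2r` and `Δ''` is orthogonal to `Θ*` on both sides, so
`‖Θ* + Δ''‖_nu = ‖Θ*‖_nu + ‖Δ''‖_nu`. Together with `|⟨M, Δ⟩| ≤ ‖M‖_op ‖Δ‖_nu ≤ (λ/2) ‖Δ‖_nu`
this forces the cone condition `‖Δ''‖_nu ≤ 3‖Δ'‖_nu`, hence
`‖Δ‖_nu ≤ 4‖Δ'‖_nu ≤ 4√(2r) ‖Δ'‖_F ≤ 4√(2r) ‖Δ‖_F`. Under restricted strong convexity the basic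
inequality also gives `κ‖Δ‖_F² ≤ 3λ‖Δ'‖_nu`, which yields the Frobenius and nuclear bounds.

The duality `⟨M, Z⟩ ≤ ‖M‖_op ‖Z‖_nu`, the triangle inequality and the additivity of the nuclear
norm on orthogonal matrices are all read off the eigendecomposition of `ZᵀZ` and the dual
certificate `U Vᵀ` of a singular value decomposition `Z = U Σ Vᵀ`.
-/

open Matrix

theorem Matrix.rank_add_le {m n K : Type*} [Fintype n] [Field K] (A B : Matrix m n K) :
    (A + B).rank ≤ A.rank + B.rank := by
  rw [Matrix.rank, Matrix.rank, Matrix.rank, mulVecLin_add]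
  refine (Submodule.finrank_mono ?_).trans (Submodule.finrank_add_le_finrank_add_finrank _ _)
  rintro _ ⟨x, rfl⟩
  exact Submodule.add_mem_sup ⟨x, rfl⟩ ⟨x, rfl⟩

section TraceInner

variable {d : ℕ}

lemma minner_eq_trace (A B : Matrix (Fin d) (Fin d) ℝ) : minner A B = trace (Aᵀ * B) := by
  simp only [minner, trace, Matrix.diag, mul_apply, transpose_apply]
  exact Finset.sum_comm

lemma minner_comm (A B : Matrix (Fin d) (Fin d) ℝ) : minner A B = minner B A := by
  simp [minner, mul_comm]

lemma minner_add_left (A B C : Matrix (Fin d) (Fin d) ℝ) :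
    minner (A + B) C = minner A C + minner B C := by
  simp [minner_eq_trace, add_mul]

lemma minner_add_right (A B C : Matrix (Fin d) (Fin d) ℝ) :
    minner A (B + C) = minner A B + minner A C := by
  simp [minner_eq_trace, mul_add]

lemma minner_neg_left (A B : Matrix (Fin d) (Fin d) ℝ) : minner (-A) B = -minner A B := by
  simp [minner_eq_trace]

lemma minner_self (A : Matrix (Fin d) (Fin d) ℝ) : minner A A = frobNorm A ^ 2 := by
  rw [frobNorm, Real.sq_sqrt (by positivity)]
  simp only [minner, sq]

lemma mulVec_dotProduct_mulVec (A : Matrix (Fin d) (Fin d) ℝ) (x y : Fin d → ℝ) :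
    (A *ᵥ x) ⬝ᵥ (A *ᵥ y) = x ⬝ᵥ ((Aᵀ * A) *ᵥ y) := by
  rw [dotProduct_mulVec, ← vecMul_transpose, vecMul_vecMul, ← dotProduct_mulVec]

lemma frobNorm_nonneg (A : Matrix (Fin d) (Fin d) ℝ) : 0 ≤ frobNorm A := Real.sqrt_nonneg _

end TraceInner

section OperatorNorm

variable {d : ℕ}

lemma dotProduct_self_nonneg (v : Fin d → ℝ) : 0 ≤ v ⬝ᵥ v := by
  simpa using dotProduct_star_self_nonneg v

lemma l2_eq_sqrt_dotProduct (v : Fin d → ℝ) : l2 v = √(v ⬝ᵥ v) := by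
  simp [l2, dotProduct, sq]

lemma dotProduct_le_l2_mul_l2 (v w : Fin d → ℝ) : v ⬝ᵥ w ≤ l2 v * l2 w :=
  Real.sum_mul_le_sqrt_mul_sqrt _ v w

lemma l2_neg (v : Fin d → ℝ) : l2 (-v) = l2 v := by simp [l2]

lemma l2_mulVec_le_frobNorm_mul_l2 (A : Matrix (Fin d) (Fin d) ℝ) (v : Fin d → ℝ) :
    l2 (A *ᵥ v) ≤ frobNorm A * l2 v := by
  rw [l2, l2, frobNorm, ← Real.sqrt_mul (by positivity), Finset.sum_mul]
  exact Real.sqrt_le_sqrt <|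
    Finset.sum_le_sum fun i _ => Finset.sum_mul_sq_le_sq_mul_sq Finset.univ (A i) v

lemma l2_mulVec_le_opNorm (A : Matrix (Fin d) (Fin d) ℝ) {v : Fin d → ℝ} (hv : l2 v = 1) :
    l2 (A *ᵥ v) ≤ opNorm A := by
  refine le_csSup ⟨frobNorm A, ?_⟩ ⟨v, hv, rfl⟩
  rintro _ ⟨w, hw, rfl⟩
  simpa [hw] using l2_mulVec_le_frobNorm_mul_l2 A w

lemma opNorm_le {A : Matrix (Fin d) (Fin d) ℝ} {c : ℝ} (hc : 0 ≤ c)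
    (h : ∀ v, l2 v = 1 → l2 (A *ᵥ v) ≤ c) : opNorm A ≤ c :=
  Real.sSup_le (by rintro _ ⟨v, hv, rfl⟩; exact h v hv) hc

lemma opNorm_neg (A : Matrix (Fin d) (Fin d) ℝ) : opNorm (-A) = opNorm A := by
  simp [opNorm, neg_mulVec, l2_neg]

lemma opNorm_le_one_of_isIdempotentElem {W : Matrix (Fin d) (Fin d) ℝ}
    (h : IsIdempotentElem (Wᵀ * W)) : opNorm W ≤ 1 := by
  refine opNorm_le zero_le_one fun v hv => ?_
  set P := Wᵀ * W
  have hv1 : v ⬝ᵥ v = 1 := by rw [← Real.sqrt_eq_one, ← l2_eq_sqrt_dotProduct, hv]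
  have hPv : (P *ᵥ v) ⬝ᵥ (P *ᵥ v) = v ⬝ᵥ (P *ᵥ v) := by
    rw [mulVec_dotProduct_mulVec, show Pᵀ = P by simp [P], h.eq]
  have hres := dotProduct_self_nonneg (v - P *ᵥ v)
  rw [l2_eq_sqrt_dotProduct, Real.sqrt_le_one, mulVec_dotProduct_mulVec]
  rw [sub_dotProduct, dotProduct_sub, dotProduct_sub, hPv, dotProduct_comm (P *ᵥ v)] at hres
  linarith

end OperatorNorm

section SingularSystem

variable {d : ℕ} (A : Matrix (Fin d) (Fin d) ℝ)

def sqSingularValue (j : Fin d) : ℝ :=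
  (posSemidef_conjTranspose_mul_self A).1.eigenvalues j

def rightSingularVector (j : Fin d) : Fin d → ℝ :=
  ⇑((posSemidef_conjTranspose_mul_self A).1.eigenvectorBasis j)

lemma nucNorm_eq_sum_sqrt : nucNorm A = ∑ j, √(sqSingularValue A j) := rfl

lemma sqSingularValue_nonneg (j : Fin d) : 0 ≤ sqSingularValue A j :=
  (posSemidef_conjTranspose_mul_self A).eigenvalues_nonneg j

lemma transpose_mul_self_mulVec_rightSingularVector (j : Fin d) :
    (Aᵀ * A) *ᵥ rightSingularVector A j = sqSingularValue A j • rightSingularVector A j := by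
  rw [← conjTranspose_eq_transpose_of_trivial]
  exact (posSemidef_conjTranspose_mul_self A).1.mulVec_eigenvectorBasis j

lemma rightSingularVector_dotProduct (j k : Fin d) :
    rightSingularVector A j ⬝ᵥ rightSingularVector A k = if j = k then 1 else 0 := by
  have h := orthonormal_iff_ite.mp
    (posSemidef_conjTranspose_mul_self A).1.eigenvectorBasis.orthonormal j k
  simpa [PiLp.inner_apply, rightSingularVector, dotProduct, mul_comm] using h

lemma sum_vecMulVec_rightSingularVector :
    ∑ j, vecMulVec (rightSingularVector A j) (rightSingularVector A j) = 1 := by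
  have h := Unitary.coe_mul_star_self (posSemidef_conjTranspose_mul_self A).1.eigenvectorUnitary
  ext l k
  simpa [mul_apply, rightSingularVector, vecMulVec_apply, Matrix.sum_apply] using
    congrFun (congrFun h l) k

lemma eq_sum_vecMulVec_mulVec_rightSingularVector (M : Matrix (Fin d) (Fin d) ℝ) :
    M = ∑ j, vecMulVec (M *ᵥ rightSingularVector A j) (rightSingularVector A j) := by
  simp_rw [← mul_vecMulVec, ← Finset.mul_sum, sum_vecMulVec_rightSingularVector, mul_one]

lemma sum_mulVec_rightSingularVector_dotProduct (M N : Matrix (Fin d) (Fin d) ℝ) :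
    ∑ j, (M *ᵥ rightSingularVector A j) ⬝ᵥ (N *ᵥ rightSingularVector A j) = minner M N := by
  rw [minner_eq_trace, eq_sum_vecMulVec_mulVec_rightSingularVector A (Mᵀ * N), trace_sum]
  simp_rw [trace_vecMulVec, ← mulVec_mulVec, dotProduct_comm, dotProduct_mulVec, vecMul_transpose]

lemma mulVec_rightSingularVector_dotProduct (j k : Fin d) :
    (A *ᵥ rightSingularVector A j) ⬝ᵥ (A *ᵥ rightSingularVector A k) =
      if j = k then sqSingularValue A j else 0 := by
  rw [mulVec_dotProduct_mulVec, transpose_mul_self_mulVec_rightSingularVector, dotProduct_smul,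
    rightSingularVector_dotProduct]
  split_ifs with h <;> simp [h]

lemma sum_sqSingularValue : ∑ j, sqSingularValue A j = frobNorm A ^ 2 := by
  rw [← minner_self, ← sum_mulVec_rightSingularVector_dotProduct A]
  simp [mulVec_rightSingularVector_dotProduct]

lemma rank_eq_card_sqSingularValue_ne_zero :
    A.rank = Fintype.card {j // sqSingularValue A j ≠ 0} := by
  rw [← rank_conjTranspose_mul_self]
  exact (posSemidef_conjTranspose_mul_self A).1.rank_eq_card_non_zero_eigs

end SingularSystem

section GramCalculus

variable {d : ℕ} (A : Matrix (Fin d) (Fin d) ℝ)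

/-- `gramFun A f = f(AᵀA)`, through the eigendecomposition of `AᵀA`. -/
def gramFun (f : ℝ → ℝ) : Matrix (Fin d) (Fin d) ℝ :=
  ∑ j, f (sqSingularValue A j) • vecMulVec (rightSingularVector A j) (rightSingularVector A j)

lemma gramFun_mulVec_rightSingularVector (f : ℝ → ℝ) (k : Fin d) :
    gramFun A f *ᵥ rightSingularVector A k = f (sqSingularValue A k) • rightSingularVector A k := by
  simp [gramFun, sum_mulVec, smul_mulVec, vecMulVec_mulVec, rightSingularVector_dotProduct]

lemma ext_rightSingularVector {M N : Matrix (Fin d) (Fin d) ℝ}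
    (h : ∀ j, M *ᵥ rightSingularVector A j = N *ᵥ rightSingularVector A j) : M = N := by
  rw [eq_sum_vecMulVec_mulVec_rightSingularVector A M,
    eq_sum_vecMulVec_mulVec_rightSingularVector A N]
  simp_rw [h]

lemma gramFun_mul (f g : ℝ → ℝ) :
    gramFun A f * gramFun A g = gramFun A (fun s => f s * g s) :=
  ext_rightSingularVector A fun j => by
    simp [← mulVec_mulVec, gramFun_mulVec_rightSingularVector, mulVec_smul, smul_smul, mul_comm]

lemma gramFun_id : gramFun A id = Aᵀ * A :=
  ext_rightSingularVector A fun j => by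
    rw [gramFun_mulVec_rightSingularVector, transpose_mul_self_mulVec_rightSingularVector, id]

lemma gramFun_congr {f g : ℝ → ℝ} (h : ∀ s, 0 ≤ s → f s = g s) : gramFun A f = gramFun A g :=
  Finset.sum_congr rfl fun j _ => by rw [h _ (sqSingularValue_nonneg A j)]

lemma transpose_gramFun (f : ℝ → ℝ) : (gramFun A f)ᵀ = gramFun A f := by
  simp [gramFun, transpose_sum, transpose_smul, transpose_vecMulVec]

lemma trace_gramFun (f : ℝ → ℝ) : trace (gramFun A f) = ∑ j, f (sqSingularValue A j) := by
  simp [gramFun, trace_sum, trace_smul, rightSingularVector_dotProduct]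

end GramCalculus

section RowProjection

variable {d : ℕ} (A : Matrix (Fin d) (Fin d) ℝ)

/-- The orthogonal projection onto the row space of `A`: since `0⁻¹ = 0`, `s ↦ s⁻¹ * s` is
the indicator of `s ≠ 0`. -/
def rowProj : Matrix (Fin d) (Fin d) ℝ := gramFun A fun s => s⁻¹ * s

lemma transpose_rowProj : (rowProj A)ᵀ = rowProj A := transpose_gramFun A _

lemma isIdempotentElem_rowProj : IsIdempotentElem (rowProj A) := by
  rw [IsIdempotentElem, rowProj, gramFun_mul]
  congr 1
  funext s
  by_cases hs : s = 0 <;> simp [hs]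

lemma rowProj_eq_gramFun_inv_mul : rowProj A = gramFun A (·⁻¹) * (Aᵀ * A) := by
  rw [← gramFun_id, gramFun_mul]
  rfl

lemma rowProj_eq_mul_gramFun_inv : rowProj A = Aᵀ * A * gramFun A (·⁻¹) := by
  rw [← gramFun_id, gramFun_mul, rowProj]
  simp_rw [id, mul_comm]

lemma mul_rowProj : A * rowProj A = A := by
  have h : Aᴴ * A * (rowProj A - 1) = 0 := by
    rw [conjTranspose_eq_transpose_of_trivial, mul_sub, mul_one, ← gramFun_id, rowProj,
      gramFun_mul, sub_eq_zero]
    congr 1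
    funext s
    by_cases hs : s = 0 <;> simp [hs]
  rwa [conjTranspose_mul_self_mul_eq_zero, mul_sub, mul_one, sub_eq_zero] at h

lemma rank_rowProj_le : (rowProj A).rank ≤ A.rank := by
  rw [rowProj_eq_mul_gramFun_inv, mul_assoc]
  exact (rank_mul_le_left _ _).trans (rank_transpose A).le

lemma rowProj_mul_rowProj_eq_zero {A B : Matrix (Fin d) (Fin d) ℝ} (h : A * Bᵀ = 0) :
    rowProj A * rowProj B = 0 := by
  rw [rowProj_eq_gramFun_inv_mul, rowProj_eq_mul_gramFun_inv]
  simp only [mul_assoc]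
  rw [← mul_assoc A, h]
  simp

end RowProjection

section PolarFactor

variable {d : ℕ} (A : Matrix (Fin d) (Fin d) ℝ)

/-- The partial isometry `U Vᵀ` of a singular value decomposition `A = U Σ Vᵀ`, i.e.
`A (AᵀA)^(-1/2)` on the row space of `A`. It is the dual certificate of the nuclear norm of `A`. -/
def polarFactor : Matrix (Fin d) (Fin d) ℝ := A * gramFun A fun s => (√s)⁻¹

lemma minner_polarFactor_self : minner (polarFactor A) A = nucNorm A := by
  rw [minner_eq_trace, polarFactor, transpose_mul, transpose_gramFun, mul_assoc, ← gramFun_id,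
    gramFun_mul, trace_gramFun, nucNorm_eq_sum_sqrt]
  simp_rw [id, inv_mul_eq_div, Real.div_sqrt]

lemma transpose_polarFactor_mul_self : (polarFactor A)ᵀ * polarFactor A = rowProj A := by
  rw [polarFactor, transpose_mul, transpose_gramFun, mul_assoc, ← mul_assoc Aᵀ, ← gramFun_id,
    gramFun_mul, gramFun_mul, rowProj]
  refine gramFun_congr A fun s hs => ?_
  rw [id, mul_left_comm, ← mul_inv, Real.mul_self_sqrt hs, mul_comm]

variable {A} {B : Matrix (Fin d) (Fin d) ℝ}

lemma minner_polarFactor_eq_zero (h : Aᵀ * B = 0) : minner (polarFactor A) B = 0 := by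
  rw [minner_eq_trace, polarFactor, transpose_mul, mul_assoc, h, mul_zero, trace_zero]

lemma transpose_polarFactor_mul_polarFactor_eq_zero (h : Aᵀ * B = 0) :
    (polarFactor A)ᵀ * polarFactor B = 0 := by
  rw [polarFactor, polarFactor, transpose_mul, mul_assoc, ← mul_assoc Aᵀ, h, zero_mul, mul_zero]

end PolarFactor

section NuclearNorm

variable {d : ℕ}

lemma nucNorm_nonneg (A : Matrix (Fin d) (Fin d) ℝ) : 0 ≤ nucNorm A :=
  Finset.sum_nonneg fun _ _ => Real.sqrt_nonneg _

lemma nucNorm_neg (A : Matrix (Fin d) (Fin d) ℝ) : nucNorm (-A) = nucNorm A := by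
  simp [nucNorm]

lemma minner_le_opNorm_mul_nucNorm (M Z : Matrix (Fin d) (Fin d) ℝ) :
    minner M Z ≤ opNorm M * nucNorm Z := by
  rw [← sum_mulVec_rightSingularVector_dotProduct Z, nucNorm_eq_sum_sqrt, Finset.mul_sum]
  refine Finset.sum_le_sum fun j _ => ?_
  have hZj : l2 (Z *ᵥ rightSingularVector Z j) = √(sqSingularValue Z j) := by
    rw [l2_eq_sqrt_dotProduct, mulVec_rightSingularVector_dotProduct, if_pos rfl]
  have hj : l2 (rightSingularVector Z j) = 1 := by
    rw [l2_eq_sqrt_dotProduct, rightSingularVector_dotProduct, if_pos rfl, Real.sqrt_one]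
  calc _ ≤ l2 (M *ᵥ rightSingularVector Z j) * l2 (Z *ᵥ rightSingularVector Z j) :=
        dotProduct_le_l2_mul_l2 _ _
    _ ≤ opNorm M * √(sqSingularValue Z j) := by
        rw [hZj]
        gcongr
        exact l2_mulVec_le_opNorm M hj

lemma abs_minner_le_opNorm_mul_nucNorm (M Z : Matrix (Fin d) (Fin d) ℝ) :
    |minner M Z| ≤ opNorm M * nucNorm Z := by
  have h := minner_le_opNorm_mul_nucNorm (-M) Z
  rw [minner_neg_left, opNorm_neg] at h
  exact abs_le.mpr ⟨by linarith, minner_le_opNorm_mul_nucNorm M Z⟩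

lemma minner_le_nucNorm_of_opNorm_le_one {W : Matrix (Fin d) (Fin d) ℝ} (hW : opNorm W ≤ 1)
    (Z : Matrix (Fin d) (Fin d) ℝ) : minner W Z ≤ nucNorm Z :=
  (minner_le_opNorm_mul_nucNorm W Z).trans (mul_le_of_le_one_left (nucNorm_nonneg Z) hW)

lemma opNorm_polarFactor_le_one (A : Matrix (Fin d) (Fin d) ℝ) : opNorm (polarFactor A) ≤ 1 := by
  apply opNorm_le_one_of_isIdempotentElem
  rw [transpose_polarFactor_mul_self]
  exact isIdempotentElem_rowProj A

lemma opNorm_polarFactor_add_le_one {A B : Matrix (Fin d) (Fin d) ℝ} (h₁ : Aᵀ * B = 0)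
    (h₂ : A * Bᵀ = 0) : opNorm (polarFactor A + polarFactor B) ≤ 1 := by
  have h₁' : Bᵀ * A = 0 := by simpa using congrArg transpose h₁
  have h₂' : B * Aᵀ = 0 := by simpa using congrArg transpose h₂
  apply opNorm_le_one_of_isIdempotentElem
  rw [transpose_add, add_mul, mul_add, mul_add, transpose_polarFactor_mul_self,
    transpose_polarFactor_mul_self, transpose_polarFactor_mul_polarFactor_eq_zero h₁,
    transpose_polarFactor_mul_polarFactor_eq_zero h₁', add_zero, zero_add]
  refine (isIdempotentElem_rowProj A).add (isIdempotentElem_rowProj B) ?_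
  rw [rowProj_mul_rowProj_eq_zero h₂, rowProj_mul_rowProj_eq_zero h₂', add_zero]

lemma nucNorm_add_le (A B : Matrix (Fin d) (Fin d) ℝ) :
    nucNorm (A + B) ≤ nucNorm A + nucNorm B := by
  rw [← minner_polarFactor_self, minner_add_right]
  exact add_le_add (minner_le_nucNorm_of_opNorm_le_one (opNorm_polarFactor_le_one _) A)
    (minner_le_nucNorm_of_opNorm_le_one (opNorm_polarFactor_le_one _) B)

lemma nucNorm_add_of_orthogonal {A B : Matrix (Fin d) (Fin d) ℝ} (h₁ : Aᵀ * B = 0)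
    (h₂ : A * Bᵀ = 0) : nucNorm (A + B) = nucNorm A + nucNorm B := by
  have h₁' : Bᵀ * A = 0 := by simpa using congrArg transpose h₁
  refine (nucNorm_add_le A B).antisymm ?_
  have h := minner_le_nucNorm_of_opNorm_le_one (opNorm_polarFactor_add_le_one h₁ h₂) (A + B)
  rwa [minner_add_left, minner_add_right, minner_add_right, minner_polarFactor_self,
    minner_polarFactor_self, minner_polarFactor_eq_zero h₁, minner_polarFactor_eq_zero h₁',
    add_zero, zero_add] at h

lemma nucNorm_add_sub_le_of_orthogonal {A B : Matrix (Fin d) (Fin d) ℝ} (h₁ : Aᵀ * B = 0)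
    (h₂ : A * Bᵀ = 0) (C : Matrix (Fin d) (Fin d) ℝ) :
    nucNorm A + nucNorm B - nucNorm C ≤ nucNorm (A + (C + B)) := by
  have h := nucNorm_add_le (A + (C + B)) (-C)
  rw [nucNorm_neg, show A + (C + B) + -C = A + B by abel, nucNorm_add_of_orthogonal h₁ h₂] at h
  linarith

lemma nucNorm_le_sqrt_rank_mul_frobNorm (A : Matrix (Fin d) (Fin d) ℝ) :
    nucNorm A ≤ √A.rank * frobNorm A := by
  classical
  have hsupp : ∀ j, √(sqSingularValue A j) =
      (if sqSingularValue A j ≠ 0 then 1 else 0) * √(sqSingularValue A j) := by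
    intro j
    split_ifs with h <;> simp_all
  calc nucNorm A = ∑ j, (if sqSingularValue A j ≠ 0 then 1 else 0) * √(sqSingularValue A j) :=
        Finset.sum_congr rfl fun j _ => hsupp j
    _ ≤ √(∑ j, (if sqSingularValue A j ≠ 0 then 1 else 0) ^ 2) *
          √(∑ j, √(sqSingularValue A j) ^ 2) := Real.sum_mul_le_sqrt_mul_sqrt _ _ _
    _ = √A.rank * frobNorm A := by
        simp_rw [ite_pow, one_pow, zero_pow two_ne_zero, Real.sq_sqrt (sqSingularValue_nonneg A _),
          sum_sqSingularValue, Real.sqrt_sq (frobNorm_nonneg A), Finset.sum_boole,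
          rank_eq_card_sqSingularValue_ne_zero, Fintype.card_subtype]

end NuclearNorm

section Decomposition

variable {d : ℕ}

lemma minner_eq_zero_of_projections {P Q : Matrix (Fin d) (Fin d) ℝ} (hPt : Pᵀ = P)
    (hP : IsIdempotentElem P) (hQt : Qᵀ = Q) (hQ : IsIdempotentElem Q)
    (Δ : Matrix (Fin d) (Fin d) ℝ) :
    minner (P * Δ + (1 - P) * Δ * Q) ((1 - P) * Δ * (1 - Q)) = 0 := by
  have hcross : (P * Δ)ᵀ * ((1 - P) * Δ * (1 - Q)) = 0 := by
    rw [transpose_mul, hPt, mul_assoc, ← mul_assoc P, ← mul_assoc P, hP.mul_one_sub_self]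
    simp
  have hdiag : ((1 - P) * Δ * Q)ᵀ * ((1 - P) * Δ * (1 - Q)) =
      Q * (Δᵀ * (1 - P) * Δ * (1 - Q)) := by
    simp only [transpose_mul, transpose_sub, transpose_one, hPt, hQt, mul_assoc]
    rw [← mul_assoc (1 - P) (1 - P), hP.one_sub.eq]
  rw [minner_add_left, minner_eq_trace, minner_eq_trace, hcross, hdiag, trace_mul_comm,
    mul_assoc, hQ.one_sub_mul_self, mul_zero, trace_zero, add_zero]

lemma exists_lowRank_add_orthogonal (Θ Δ : Matrix (Fin d) (Fin d) ℝ) :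
    ∃ D₁ D₂ : Matrix (Fin d) (Fin d) ℝ, Δ = D₁ + D₂ ∧ D₁.rank ≤ 2 * Θ.rank ∧
      minner D₁ D₂ = 0 ∧ Θᵀ * D₂ = 0 ∧ Θ * D₂ᵀ = 0 := by
  -- `P` and `Q` project onto the column and the row space of `Θ`.
  set P := rowProj Θᵀ
  set Q := rowProj Θ
  have hΘP : Θᵀ * (1 - P) = 0 := by
    rw [mul_sub, mul_one, mul_rowProj, sub_self]
  have hΘQ : Θ * (1 - Q) = 0 := by
    rw [mul_sub, mul_one, mul_rowProj, sub_self]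
  refine ⟨P * Δ + (1 - P) * Δ * Q, (1 - P) * Δ * (1 - Q), by noncomm_ring, ?_,
    minner_eq_zero_of_projections (transpose_rowProj _) (isIdempotentElem_rowProj _)
      (transpose_rowProj _) (isIdempotentElem_rowProj _) Δ, ?_, ?_⟩
  · have hP : (P * Δ).rank ≤ Θ.rank :=
      ((rank_mul_le_left _ _).trans (rank_rowProj_le _)).trans (rank_transpose Θ).le
    have hQ : ((1 - P) * Δ * Q).rank ≤ Θ.rank :=
      (rank_mul_le_right _ _).trans (rank_rowProj_le _)
    exact (Matrix.rank_add_le _ _).trans (by omega)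
  · rw [← mul_assoc, ← mul_assoc, hΘP, zero_mul, zero_mul]
  · rw [transpose_mul, transpose_mul, transpose_sub, transpose_one, transpose_rowProj,
      ← mul_assoc, hΘQ, zero_mul]

end Decomposition

section Estimation

variable {d : ℕ}

lemma frobNorm_le_frobNorm_add {A B : Matrix (Fin d) (Fin d) ℝ} (h : minner A B = 0) :
    frobNorm A ≤ frobNorm (A + B) := by
  have hpyth : frobNorm (A + B) ^ 2 = frobNorm A ^ 2 + frobNorm B ^ 2 := by
    rw [← minner_self, ← minner_self, ← minner_self, minner_add_left, minner_add_right,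
      minner_add_right, h, minner_comm B, h]
    ring
  rw [← sq_le_sq₀ (frobNorm_nonneg _) (frobNorm_nonneg _), hpyth]
  exact le_add_of_nonneg_right (sq_nonneg _)

lemma le_div_of_mul_sq_le {κ x c : ℝ} (hκ : 0 < κ) (hc : 0 ≤ c) (hx : 0 ≤ x)
    (h : κ * x ^ 2 ≤ c * x) : x ≤ c / κ := by
  rcases hx.eq_or_lt with rfl | hx
  · exact div_nonneg hc hκ.le
  · rw [le_div_iff₀ hκ]
    nlinarith

lemma sum_sq_sub_minner_add_div {n : ℕ} (X : Fin n → Matrix (Fin d) (Fin d) ℝ) (y : Fin n → ℝ)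
    (Θ Δ : Matrix (Fin d) (Fin d) ℝ) :
    (∑ k, (y k - minner (X k) (Θ + Δ)) ^ 2) / (2 * n) =
      (∑ k, (y k - minner (X k) Θ) ^ 2) / (2 * n) +
        (minner ((n : ℝ)⁻¹ • ∑ k, (minner (X k) Θ - y k) • X k) Δ +
          (∑ k, minner (X k) Δ ^ 2) / (2 * n)) := by
  have hgrad : minner ((n : ℝ)⁻¹ • ∑ k, (minner (X k) Θ - y k) • X k) Δ =
      (n : ℝ)⁻¹ * ∑ k, (minner (X k) Θ - y k) * minner (X k) Δ := by
    simp [minner_eq_trace, transpose_sum, Finset.sum_mul, trace_sum]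
  have hexpand : ∑ k, (y k - minner (X k) (Θ + Δ)) ^ 2 = ∑ k, (y k - minner (X k) Θ) ^ 2 +
      2 * ∑ k, (minner (X k) Θ - y k) * minner (X k) Δ + ∑ k, minner (X k) Δ ^ 2 := by
    rw [Finset.mul_sum, ← Finset.sum_add_distrib, ← Finset.sum_add_distrib]
    exact Finset.sum_congr rfl fun k _ => by rw [minner_add_right]; ring
  rw [hgrad, hexpand]
  rcases eq_or_ne (n : ℝ) 0 with hn | hn
  · simp [hn]
  · field_simp
    ring

lemma nucNorm_le_of_basic_inequality {Θ Δ M : Matrix (Fin d) (Fin d) ℝ} {r : ℕ} {lam S : ℝ}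
    (hrank : Θ.rank ≤ r) (hlam : 0 < lam) (hM : 2 * opNorm M ≤ lam) (hS : 0 ≤ S)
    (hbasic : minner M Δ + S + lam * nucNorm (Θ + Δ) ≤ lam * nucNorm Θ) :
    nucNorm Δ ≤ 6 * √r * frobNorm Δ ∧ S ≤ 9 / 4 * lam * √r * frobNorm Δ := by
  obtain ⟨D₁, D₂, rfl, hrank₁, horth, h₁, h₂⟩ := exists_lowRank_add_orthogonal Θ Δ
  have hdecomp := nucNorm_add_sub_le_of_orthogonal h₁ h₂ D₁
  have hdual : -minner M (D₁ + D₂) ≤ lam / 2 * (nucNorm D₁ + nucNorm D₂) :=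
    calc _ ≤ opNorm M * nucNorm (D₁ + D₂) :=
          (neg_le_abs _).trans (abs_minner_le_opNorm_mul_nucNorm _ _)
      _ ≤ lam / 2 * (nucNorm D₁ + nucNorm D₂) :=
          mul_le_mul (by linarith) (nucNorm_add_le _ _) (nucNorm_nonneg _) (by linarith)
  have hS' : S ≤ lam * (3 / 2 * nucNorm D₁ - 1 / 2 * nucNorm D₂) := by
    linarith [mul_le_mul_of_nonneg_left hdecomp hlam.le]
  have hcone : nucNorm D₂ ≤ 3 * nucNorm D₁ := by
    linarith [nonneg_of_mul_nonneg_right (hS.trans hS') hlam]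
  have hN₁ : nucNorm D₁ ≤ 3 / 2 * √r * frobNorm (D₁ + D₂) := by
    have hsqrt : √(D₁.rank : ℝ) ≤ 3 / 2 * √r :=
      calc √(D₁.rank : ℝ) ≤ √2 * √r := by
            rw [← Real.sqrt_mul zero_le_two]
            gcongr
            exact_mod_cast hrank₁.trans (by omega)
        _ ≤ 3 / 2 * √r := by
            gcongr
            rw [Real.sqrt_le_left] <;> norm_num
    exact (nucNorm_le_sqrt_rank_mul_frobNorm D₁).trans <|
      mul_le_mul hsqrt (frobNorm_le_frobNorm_add horth) (frobNorm_nonneg _) (by positivity)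
  refine ⟨by linarith [nucNorm_add_le D₁ D₂], ?_⟩
  calc S ≤ 3 / 2 * lam * nucNorm D₁ := by linarith [mul_nonneg hlam.le (nucNorm_nonneg D₂)]
    _ ≤ 3 / 2 * lam * (3 / 2 * √r * frobNorm (D₁ + D₂)) := by gcongr
    _ = 9 / 4 * lam * √r * frobNorm (D₁ + D₂) := by ring

end Estimation

theorem matrix_completion_framework_general
    {d n : ℕ} (X : Fin n → Matrix (Fin d) (Fin d) ℝ)
    (Θs : Matrix (Fin d) (Fin d) ℝ) (r : ℕ) (hrank : Θs.rank ≤ r)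
    (α : ℝ) (hΘs : matSup Θs ≤ α)
    (qy : Fin n → ℝ) (lam : ℝ) (hlam : 0 < lam)
    (Θh : Matrix (Fin d) (Fin d) ℝ)
    (hmin : ∀ Θ : Matrix (Fin d) (Fin d) ℝ, matSup Θ ≤ α →
      (∑ k, (qy k - minner (X k) Θh) ^ 2) / (2 * n) + lam * nucNorm Θh
        ≤ (∑ k, (qy k - minner (X k) Θ) ^ 2) / (2 * n) + lam * nucNorm Θ)
    (hlam2 : 2 * opNorm ((n : ℝ)⁻¹ • ∑ k, (minner (X k) Θs - qy k) • X k) ≤ lam) :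
    nucNorm (Θh - Θs) ≤ 10 * Real.sqrt r * frobNorm (Θh - Θs) ∧
    (∀ κ : ℝ, 0 < κ → κ * (frobNorm (Θh - Θs)) ^ 2 ≤ (∑ k, (minner (X k) (Θh - Θs)) ^ 2) / n →
      frobNorm (Θh - Θs) ≤ 30 * Real.sqrt r * (lam / κ) ∧
      nucNorm (Θh - Θs) ≤ 300 * r * (lam / κ)) := by
  obtain ⟨Δ, rfl⟩ : ∃ Δ, Θh = Θs + Δ := ⟨Θh - Θs, by abel⟩
  rw [add_sub_cancel_left]
  have hbasic := hmin Θs hΘs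
  rw [sum_sq_sub_minner_add_div, add_assoc, add_le_add_iff_left] at hbasic
  obtain ⟨hnuc, hS⟩ := nucNorm_le_of_basic_inequality hrank hlam hlam2 (by positivity) hbasic
  have hF₀ := frobNorm_nonneg Δ
  have hnuc' : nucNorm Δ ≤ 10 * √r * frobNorm Δ := hnuc.trans (by gcongr; norm_num)
  refine ⟨hnuc', fun κ hκ hrsc => ?_⟩
  have hrsc' : κ * frobNorm Δ ^ 2 ≤ 9 / 2 * lam * √r * frobNorm Δ :=
    calc κ * frobNorm Δ ^ 2 ≤ 2 * ((∑ k, minner (X k) Δ ^ 2) / (2 * n)) := hrsc.trans_eq (by ring)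
      _ ≤ 9 / 2 * lam * √r * frobNorm Δ :=
        (mul_le_mul_of_nonneg_left hS zero_le_two).trans_eq (by ring)
  have hF : frobNorm Δ ≤ 30 * √r * (lam / κ) :=
    calc frobNorm Δ ≤ 9 / 2 * lam * √r / κ := le_div_of_mul_sq_le hκ (by positivity) hF₀ hrsc'
      _ = 9 / 2 * √r * (lam / κ) := by ring
      _ ≤ 30 * √r * (lam / κ) := by gcongr; norm_num
  refine ⟨hF, ?_⟩
  calc nucNorm Δ ≤ 10 * √r * (30 * √r * (lam / κ)) := hnuc'.trans (by gcongr)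
    _ = 300 * r * (lam / κ) := by
        rw [show 10 * √r * (30 * √r * (lam / κ)) = 300 * (√r * √r) * (lam / κ) by ring,
          Real.mul_self_sqrt (Nat.cast_nonneg r)]

/-- deterministic framework for the quantized matrix completion estimator.
Let `rank(Θ*) ≤ r`, `‖Θ*‖_∞ ≤ α`, and let `Θ̂` minimize
`(1/2n)Σ(ẏ_k − ⟨X_k, Θ⟩)² + λ‖Θ‖_nu` over `{‖Θ‖_∞ ≤ α}`. If
`λ ≥ 2‖(1/n)Σ(⟨X_k, Θ*⟩ − ẏ_k)X_k‖_op`, then `‖Δ̂‖_nu ≤ 10√r‖Δ̂‖_F`; if moreover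
`(1/n)Σ⟨X_k, Δ̂⟩² ≥ κ‖Δ̂‖_F²`, then `‖Δ̂‖_F ≤ 30√r(λ/κ)` and `‖Δ̂‖_nu ≤ 300r(λ/κ)`. -/
theorem matrix_completion_framework
    {d n : ℕ} (X : Fin n → Matrix (Fin d) (Fin d) ℝ)
    (Θs : Matrix (Fin d) (Fin d) ℝ) (r : ℕ) (hrank : Θs.rank ≤ r)
    (α : ℝ) (hΘs : matSup Θs ≤ α)
    (qy : Fin n → ℝ) (lam : ℝ) (hlam : 0 < lam)
    (Θh : Matrix (Fin d) (Fin d) ℝ) (hΘh : matSup Θh ≤ α)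
    (hmin : ∀ Θ : Matrix (Fin d) (Fin d) ℝ, matSup Θ ≤ α →
      (∑ k, (qy k - minner (X k) Θh) ^ 2) / (2 * n) + lam * nucNorm Θh
        ≤ (∑ k, (qy k - minner (X k) Θ) ^ 2) / (2 * n) + lam * nucNorm Θ)
    (hlam2 : 2 * opNorm ((n : ℝ)⁻¹ • ∑ k, (minner (X k) Θs - qy k) • X k) ≤ lam) :
    nucNorm (Θh - Θs) ≤ 10 * Real.sqrt r * frobNorm (Θh - Θs) ∧
    (∀ κ : ℝ, 0 < κ → κ * (frobNorm (Θh - Θs)) ^ 2 ≤ (∑ k, (minner (X k) (Θh - Θs)) ^ 2) / n →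
      frobNorm (Θh - Θs) ≤ 30 * Real.sqrt r * (lam / κ) ∧
      nucNorm (Θh - Θs) ≤ 300 * r * (lam / κ)) :=
  matrix_completion_framework_general X Θs r hrank α hΘs qy lam hlam Θh hmin hlam2
end
end

section
/- Let x be a random vector in ℝ^d with Σ* = E[x xᵀ] satisfying λ_min(Σ*) ≥ κ₀ > 0, let ε be a zero-mean square-integrable real random variable independent of x, let θ* ∈ ℝ^d, and set y = xᵀθ* + ε. If E|y|^{2l} ≤ M for some l ≥ 1 and M > 0, then ‖θ*‖₂ ≤ M^{1/(2l)}/κ₀^{1/2}. -/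
open MeasureTheory ProbabilityTheory

noncomputable section

section SecondMoment

variable {Ω : Type*} [MeasurableSpace Ω] {μ : Measure Ω}

theorem integral_sq_sum_mul_eq_quadForm {d : ℕ} {x : Ω → Fin d → ℝ}
    (hx : ∀ i, MemLp (fun ω => x ω i) 2 μ) {Sig : Matrix (Fin d) (Fin d) ℝ}
    (hSig : ∀ i j, ∫ ω, x ω i * x ω j ∂μ = Sig i j) (θ : Fin d → ℝ) :
    ∫ ω, (∑ i, x ω i * θ i) ^ 2 ∂μ = quadForm Sig θ := by
  have hxx : ∀ i j, Integrable (fun ω => x ω i * x ω j) μ := fun i j =>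
    (hx i).integrable_mul (hx j)
  have hexpand : ∀ ω, (∑ i, x ω i * θ i) ^ 2 = ∑ i, ∑ j, θ i * θ j * (x ω i * x ω j) := by
    intro ω
    simp only [sq, Finset.sum_mul_sum]
    exact Finset.sum_congr rfl fun i _ => Finset.sum_congr rfl fun j _ => by ring
  simp only [hexpand, quadForm]
  rw [integral_finsetSum _ fun i _ => integrable_finsetSum _ fun j _ => (hxx i j).const_mul _]
  refine Finset.sum_congr rfl fun i _ => ?_
  rw [integral_finsetSum _ fun j _ => (hxx i j).const_mul _]
  refine Finset.sum_congr rfl fun j _ => ?_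
  rw [integral_const_mul, hSig i j]
  ring

theorem integral_add_sq_of_indepFun {f g : Ω → ℝ} (hf : MemLp f 2 μ) (hg : MemLp g 2 μ)
    (hfg : IndepFun f g μ) (hg0 : ∫ ω, g ω ∂μ = 0) :
    ∫ ω, (f ω + g ω) ^ 2 ∂μ = ∫ ω, f ω ^ 2 ∂μ + ∫ ω, g ω ^ 2 ∂μ := by
  have hmul : ∫ ω, f ω * g ω ∂μ = (∫ ω, f ω ∂μ) * ∫ ω, g ω ∂μ :=
    hfg.integral_mul_eq_mul_integral hf.aestronglyMeasurable hg.aestronglyMeasurable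
  have hcross : ∫ ω, 2 * (f ω * g ω) ∂μ = 0 := by
    rw [integral_const_mul, hmul, hg0, mul_zero, mul_zero]
  have hexpand : ∀ ω, (f ω + g ω) ^ 2 = f ω ^ 2 + 2 * (f ω * g ω) + g ω ^ 2 := fun ω => by ring
  have hcrossInt : Integrable (fun ω => 2 * (f ω * g ω)) μ := (hf.integrable_mul hg).const_mul 2
  have hfirst : Integrable (fun ω => f ω ^ 2 + 2 * (f ω * g ω)) μ := hf.integrable_sq.add hcrossInt
  simp only [hexpand]
  rw [integral_add hfirst hg.integrable_sq,
    integral_add hf.integrable_sq hcrossInt, hcross, add_zero]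

theorem integral_sq_le_integral_abs_rpow [IsProbabilityMeasure μ] {Y : Ω → ℝ} {l : ℝ}
    (hl : 1 ≤ l) (hY : MemLp Y 2 μ) (hYl : Integrable (fun ω => |Y ω| ^ (2 * l)) μ) :
    ∫ ω, Y ω ^ 2 ∂μ ≤ (∫ ω, |Y ω| ^ (2 * l) ∂μ) ^ (1 / l) := by
  have hl0 : 0 < l := one_pos.trans_le hl
  have hpow : ∀ ω, (Y ω ^ 2) ^ l = |Y ω| ^ (2 * l) := fun ω => by
    rw [Real.rpow_mul (abs_nonneg _), Real.rpow_two, sq_abs]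
  have hjensen : (∫ ω, Y ω ^ 2 ∂μ) ^ l ≤ ∫ ω, |Y ω| ^ (2 * l) ∂μ := by
    simp only [← hpow]
    exact (convexOn_rpow hl).map_integral_le (Real.continuous_rpow_const hl0.le).continuousOn
      isClosed_Ici (ae_of_all _ fun ω => sq_nonneg (Y ω)) hY.integrable_sq
      (by simpa only [Function.comp_def, hpow] using hYl)
  have hm0 : 0 ≤ ∫ ω, Y ω ^ 2 ∂μ := integral_nonneg fun ω => sq_nonneg _
  calc ∫ ω, Y ω ^ 2 ∂μ = ((∫ ω, Y ω ^ 2 ∂μ) ^ l) ^ (1 / l) := by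
        rw [← Real.rpow_mul hm0, mul_one_div_cancel hl0.ne', Real.rpow_one]
    _ ≤ (∫ ω, |Y ω| ^ (2 * l) ∂μ) ^ (1 / l) :=
        Real.rpow_le_rpow (Real.rpow_nonneg hm0 _) hjensen (by positivity)

end SecondMoment

theorem le_rpow_div_rpow_of_mul_sq_le {a κ M l : ℝ} (ha : 0 ≤ a) (hκ : 0 < κ) (hM : 0 ≤ M)
    (h : κ * a ^ 2 ≤ M ^ (1 / l)) :
    a ≤ M ^ (1 / (2 * l)) / κ ^ ((1 : ℝ) / 2) := by
  have hsq : a ^ 2 ≤ M ^ (1 / l) / κ := by rw [le_div_iff₀ hκ]; linarith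
  calc a ≤ Real.sqrt (M ^ (1 / l) / κ) := (Real.le_sqrt ha (by positivity)).2 hsq
    _ = M ^ (1 / (2 * l)) / κ ^ ((1 : ℝ) / 2) := by
        rw [Real.sqrt_div' _ hκ.le, Real.sqrt_eq_rpow, Real.sqrt_eq_rpow, ← Real.rpow_mul hM]
        congr 2
        field_simp

theorem signal_l2_bound_general
    {Ω : Type*} [MeasurableSpace Ω] (μ : Measure Ω) [IsProbabilityMeasure μ]
    {d : ℕ} (x : Ω → Fin d → ℝ) (hxmeas : Measurable x)
    (hx2 : ∀ i, Integrable (fun ω => x ω i ^ 2) μ)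
    (ε : Ω → ℝ) (hεmeas : Measurable ε)
    (hε2 : Integrable (fun ω => ε ω ^ 2) μ)
    (hεmean : ∫ ω, ε ω ∂μ = 0)
    (hindep : IndepFun x ε μ)
    (Sig : Matrix (Fin d) (Fin d) ℝ)
    (hSig : ∀ i j, ∫ ω, x ω i * x ω j ∂μ = Sig i j)
    (κ₀ : ℝ) (hκ₀ : 0 < κ₀)
    (hmin : ∀ v : Fin d → ℝ, κ₀ * (l2 v) ^ 2 ≤ quadForm Sig v)
    (θs : Fin d → ℝ)
    (l M : ℝ) (hl : 1 ≤ l)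
    (hymom : ∫ ω, |(∑ i, x ω i * θs i) + ε ω| ^ (2 * l) ∂μ ≤ M)
    (hyint : Integrable (fun ω => |(∑ i, x ω i * θs i) + ε ω| ^ (2 * l)) μ) :
    l2 θs ≤ M ^ (1 / (2 * l)) / κ₀ ^ ((1 : ℝ) / 2) := by
  have hlin : Measurable fun v : Fin d → ℝ => ∑ i, v i * θs i :=
    Finset.measurable_sum _ fun i _ => (measurable_pi_apply i).mul_const _
  have hxL2 : ∀ i, MemLp (fun ω => x ω i) 2 μ := fun i =>
    (memLp_two_iff_integrable_sq
      ((measurable_pi_apply i).comp hxmeas).aestronglyMeasurable).2 (hx2 i)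
  have hεL2 : MemLp ε 2 μ := (memLp_two_iff_integrable_sq hεmeas.aestronglyMeasurable).2 hε2
  have hsignalL2 : MemLp (fun ω => ∑ i, x ω i * θs i) 2 μ :=
    memLp_finsetSum _ fun i _ => (hxL2 i).mul_const _
  have hsecond :
      ∫ ω, ((∑ i, x ω i * θs i) + ε ω) ^ 2 ∂μ = quadForm Sig θs + ∫ ω, ε ω ^ 2 ∂μ := by
    rw [integral_add_sq_of_indepFun hsignalL2 hεL2 (hindep.comp hlin measurable_id) hεmean,
      integral_sq_sum_mul_eq_quadForm hxL2 hSig]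
  have hM : 0 ≤ M := (integral_nonneg fun ω => by positivity).trans hymom
  refine le_rpow_div_rpow_of_mul_sq_le (Real.sqrt_nonneg _) hκ₀ hM ?_
  calc κ₀ * l2 θs ^ 2 ≤ quadForm Sig θs + ∫ ω, ε ω ^ 2 ∂μ :=
        le_add_of_le_of_nonneg (hmin θs) (integral_nonneg fun ω => sq_nonneg _)
    _ ≤ (∫ ω, |(∑ i, x ω i * θs i) + ε ω| ^ (2 * l) ∂μ) ^ (1 / l) :=
        hsecond ▸ integral_sq_le_integral_abs_rpow hl (hsignalL2.add hεL2) hyint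
    _ ≤ M ^ (1 / l) :=
        Real.rpow_le_rpow (integral_nonneg fun ω => by positivity) hymom (by positivity)

/-- implicit ℓ₂-bound on the signal from the response moment.
If `Σ* = E[xxᵀ]` has smallest eigenvalue at least `κ₀ > 0`, `ε` is zero-mean,
square-integrable and independent of `x`, `y = xᵀθ* + ε`, and `E|y|^{2l} ≤ M` for some
`l ≥ 1`, `M > 0`, then `‖θ*‖₂ ≤ M^{1/(2l)}/κ₀^{1/2}`. -/
theorem signal_l2_bound
    {Ω : Type*} [MeasurableSpace Ω] (μ : Measure Ω) [IsProbabilityMeasure μ]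
    {d : ℕ} (x : Ω → Fin d → ℝ) (hxmeas : Measurable x)
    (hx2 : ∀ i, Integrable (fun ω => x ω i ^ 2) μ)
    (ε : Ω → ℝ) (hεmeas : Measurable ε)
    (hε2 : Integrable (fun ω => ε ω ^ 2) μ)
    (hεmean : ∫ ω, ε ω ∂μ = 0)
    (hindep : IndepFun x ε μ)
    (Sig : Matrix (Fin d) (Fin d) ℝ)
    (hSig : ∀ i j, ∫ ω, x ω i * x ω j ∂μ = Sig i j)
    (κ₀ : ℝ) (hκ₀ : 0 < κ₀)
    (hmin : ∀ v : Fin d → ℝ, κ₀ * (l2 v) ^ 2 ≤ quadForm Sig v)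
    (θs : Fin d → ℝ)
    (l M : ℝ) (hl : 1 ≤ l) (hM : 0 < M)
    (hymom : ∫ ω, |(∑ i, x ω i * θs i) + ε ω| ^ (2 * l) ∂μ ≤ M)
    (hyint : Integrable (fun ω => |(∑ i, x ω i * θs i) + ε ω| ^ (2 * l)) μ) :
    l2 θs ≤ M ^ (1 / (2 * l)) / κ₀ ^ ((1 : ℝ) / 2) :=
  signal_l2_bound_general μ x hxmeas hx2 ε hεmeas hε2 hεmean hindep Sig hSig κ₀ hκ₀ hmin θs l M hl
    hymom hyint
end
end
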